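/- arXiv:2301.08668 — 2 statements merged into one kernel-verified Lean document; each statement's English description precedes it below -/
import Mathlib

section
/- If u is sampled uniformly from the set C = {c ∈ (ℤ/qℤ)[x]/(x^n+1) : every coefficient of c lies in {−⌊log n⌋, …, ⌊log n⌋} and deg(c) < n/2}, with q prime, q ≡ 3 mod 8, and n a power of 2, then u is invertible in R_q = (ℤ/qℤ)[x]/(x^n+1) with probability 1 − (1 + 2⌊log n⌋)^{−n/2}. -/
/-!
Over `𝔽_q` with `q ≡ 3 mod 8`, every irreducible factor of `X^(2^k) + 1` has degree `d`
divisible by `2^(k-1)`: a root has order `2^(k+1)` in `𝔽_{q^d}ˣ`, so `2^(k+1) ∣ q^d - 1`,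
while `q^d ≡ 3 mod 4` for odd `d` and, by lifting the exponent, `v₂(q^d - 1) = 2 + v₂(d)`
for even `d`. Hence a nonzero challenge, of degree `< 2^(k-1)`, is coprime to `X^(2^k) + 1`
and so a unit modulo it: `0` is the only non-invertible challenge. The challenges correspond
to coefficient vectors in `{-L, …, L}^(n/2)`, and these `2L + 1` integers stay distinct mod
`q` since `2L < q`.
-/

open Polynomial

theorem two_pow_pred_dvd_of_two_pow_succ_dvd_pow_sub_one {q d k : ℕ} (hq : q % 8 = 3)
    (h : 2 ^ (k + 1) ∣ q ^ d - 1) : 2 ^ (k - 1) ∣ d := by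
  rcases Nat.eq_zero_or_pos k with rfl | hk
  · simp
  rcases Nat.even_or_odd d with ⟨e, rfl⟩ | ⟨e, rfl⟩
  · rcases Nat.eq_zero_or_pos e with rfl | he
    · simp
    have hval : k + 1 ≤ padicValNat 2 (q ^ (e + e) - 1) :=
      (padicValNat_dvd_iff_le (Nat.sub_ne_zero_of_lt (Nat.one_lt_pow (by omega) (by omega)))).1 h
    have hlte := padicValNat.pow_two_sub_one (x := q) (n := e + e) (by omega) (by omega)
      (by omega) ⟨e, rfl⟩
    have hplus : padicValNat 2 (q + 1) < 3 := by
      by_contra! h3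
      have := (padicValNat_dvd_iff_le (by omega)).2 h3
      omega
    have hminus : padicValNat 2 (q - 1) < 2 := by
      by_contra! h2
      have := (padicValNat_dvd_iff_le (by omega)).2 h2
      omega
    exact (pow_dvd_pow 2 (by omega)).trans pow_padicValNat_dvd
  · have h4 : (q ^ (2 * e + 1)) % 4 = 3 := by
      rw [Nat.pow_mod, show q % 4 = 3 by omega, pow_succ, pow_mul]
      norm_num [Nat.mul_mod, Nat.pow_mod]
    have : 4 ∣ q ^ (2 * e + 1) - 1 := (pow_dvd_pow 2 (by omega : 2 ≤ k + 1)).trans h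
    omega

theorem two_pow_succ_dvd_card_pow_natDegree_sub_one {K : Type*} [Field K] [Fintype K]
    (hK : ringChar K ≠ 2) {p : K[X]} (hp : Irreducible p) {k : ℕ} (hdvd : p ∣ X ^ 2 ^ k + 1) :
    2 ^ (k + 1) ∣ Fintype.card K ^ p.natDegree - 1 := by
  have := Fact.mk hp
  let pb := AdjoinRoot.powerBasis hp.ne_zero
  have : Module.Finite K (AdjoinRoot p) := pb.finite
  have : Finite (AdjoinRoot p) := Module.finite_of_finite K
  let : Fintype (AdjoinRoot p) := Fintype.ofFinite _
  have hζ : AdjoinRoot.root p ^ 2 ^ k = -1 := by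
    rw [eq_neg_iff_add_eq_zero, ← AdjoinRoot.mk_X, ← map_pow, ← map_one (AdjoinRoot.mk p),
      ← map_add, AdjoinRoot.mk_eq_zero]
    exact hdvd
  have horder : orderOf (AdjoinRoot.root p) = 2 ^ (k + 1) := by
    refine orderOf_eq_prime_pow ?_ ?_
    · rw [hζ, ← map_one (algebraMap K _), ← map_neg]
      exact (algebraMap K _).injective.ne (Ring.neg_one_ne_one_of_char_ne_two hK)
    · rw [pow_succ, pow_mul, hζ, neg_one_sq]
  have hζ0 : AdjoinRoot.root p ≠ 0 := by
    rintro h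
    rw [h, zero_pow (by positivity), zero_eq_neg] at hζ
    exact one_ne_zero hζ
  have hcard : Fintype.card (AdjoinRoot p) = Fintype.card K ^ p.natDegree := by
    rw [Fintype.card_eq_nat_card, Fintype.card_eq_nat_card,
      Module.natCard_eq_pow_finrank (K := K), pb.finrank, AdjoinRoot.powerBasis_dim]
  rw [← hcard, ← horder]
  exact orderOf_dvd_of_pow_eq_one (FiniteField.pow_card_sub_one_eq_one _ hζ0)

theorem two_pow_pred_dvd_natDegree_of_dvd_X_pow_add_one {q : ℕ} [Fact q.Prime] (hq : q % 8 = 3)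
    {p : (ZMod q)[X]} (hp : Irreducible p) {k : ℕ} (hdvd : p ∣ X ^ 2 ^ k + 1) :
    2 ^ (k - 1) ∣ p.natDegree := by
  have hchar : ringChar (ZMod q) ≠ 2 := by rw [ZMod.ringChar_zmod_n]; omega
  have h := two_pow_succ_dvd_card_pow_natDegree_sub_one hchar hp hdvd
  rw [ZMod.card] at h
  exact two_pow_pred_dvd_of_two_pow_succ_dvd_pow_sub_one hq h

theorem IsCoprime.isUnit_quotient_mk_span_singleton {R : Type*} [CommRing R] {u f : R}
    (h : IsCoprime u f) : IsUnit (Ideal.Quotient.mk (Ideal.span {f}) u) := by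
  obtain ⟨a, b, hab⟩ := h
  refine IsUnit.of_mul_eq_one (Ideal.Quotient.mk _ a) ?_
  rw [← map_mul, ← map_one (Ideal.Quotient.mk _), Ideal.Quotient.eq,
    Ideal.mem_span_singleton']
  exact ⟨-b, by linear_combination -hab⟩

namespace Polynomial

variable {K : Type*} [Field K]

theorem isCoprime_of_degree_lt {u f : K[X]} (hu : u ≠ 0)
    (h : ∀ p : K[X], Irreducible p → p ∣ f → u.degree < p.degree) : IsCoprime u f :=
  isCoprime_of_irreducible_dvd (fun h0 => hu h0.1) fun p hp hpu hpf =>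
    (degree_le_of_dvd hpu hu).not_gt (h p hp hpf)

theorem isUnit_quotient_mk_iff_ne_zero {u f : K[X]} (hf : ¬IsUnit f)
    (h : ∀ p : K[X], Irreducible p → p ∣ f → u.degree < p.degree) :
    IsUnit (Ideal.Quotient.mk (Ideal.span {f}) u) ↔ u ≠ 0 := by
  refine ⟨?_, fun hu => (isCoprime_of_degree_lt hu h).isUnit_quotient_mk_span_singleton⟩
  have : Nontrivial (K[X] ⧸ Ideal.span {f}) :=
    Ideal.Quotient.nontrivial_iff.2 (by rwa [Ne, Ideal.span_singleton_eq_top])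
  rintro hu rfl
  rw [map_zero] at hu
  exact not_isUnit_zero hu

theorem natCard_degree_lt_coeff_mem {R : Type*} [Semiring R] {S : Finset R} (hS : 0 ∈ S)
    (m : ℕ) : Nat.card {u : R[X] // u.degree < m ∧ ∀ i, u.coeff i ∈ S} = S.card ^ m := by
  have hcoeff (p : degreeLT R m) :
      (∀ i, (p : R[X]).coeff i ∈ S) ↔ ∀ i, degreeLTEquiv R m p i ∈ S := by
    refine ⟨fun h i => h i, fun h i => ?_⟩
    by_cases hi : i < m
    · exact h ⟨i, hi⟩
    · rw [coeff_eq_zero_of_degree_lt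
        ((mem_degreeLT.1 p.2).trans_le (by exact_mod_cast not_lt.1 hi))]
      exact hS
  let e : {u : R[X] // u.degree < m ∧ ∀ i, u.coeff i ∈ S} ≃ (Fin m → S) :=
    (Equiv.subtypeEquivRight fun u => by rw [mem_degreeLT]).trans <|
      (Equiv.subtypeSubtypeEquivSubtypeInter _ _).symm.trans <|
      ((degreeLTEquiv R m).toEquiv.subtypeEquiv hcoeff).trans Equiv.subtypePiEquivPi
  rw [Nat.card_congr e, Nat.card_fun, Nat.card_fin, Nat.card_eq_finsetCard]

end Polynomial

noncomputable def balancedResidues (q L : ℕ) : Finset (ZMod q) :=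
  (Finset.Icc (-(L : ℤ)) L).image (↑)

theorem mem_balancedResidues {q L : ℕ} {x : ZMod q} :
    x ∈ balancedResidues q L ↔ ∃ z : ℤ, |z| ≤ L ∧ x = z := by
  simp only [balancedResidues, Finset.mem_image, Finset.mem_Icc, abs_le, eq_comm (a := x)]

theorem card_balancedResidues {q L : ℕ} (h : 2 * L < q) :
    (balancedResidues q L).card = 2 * L + 1 := by
  rw [balancedResidues, Finset.card_image_of_injOn, Int.card_Icc]
  · omega
  · intro a ha b hb hab
    simp only [Finset.coe_Icc, Set.mem_Icc] at ha hb
    have hdvd : (q : ℤ) ∣ b - a := (ZMod.intCast_eq_intCast_iff_dvd_sub a b q).1 hab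
    have := Int.eq_zero_of_abs_lt_dvd hdvd (by rw [abs_lt]; omega)
    omega

theorem natCard_mem_and_ne_div_natCard {α : Type*} {C : Set α} [Finite C] {a : α}
    (ha : a ∈ C) :
    (Nat.card {x // x ∈ C ∧ x ≠ a} : ℝ) / Nat.card C = 1 - (Nat.card C : ℝ)⁻¹ := by
  have : Nonempty C := ⟨⟨a, ha⟩⟩
  have hpos : 0 < Nat.card C := Nat.card_pos
  have hcard : Nat.card {x // x ∈ C ∧ x ≠ a} = Nat.card C - 1 := by
    change Nat.card ↥(C \ {a}) = _
    rw [Nat.card_coe_set_eq, Set.ncard_sdiff_singleton_of_mem ha, Nat.card_coe_set_eq]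
  rw [hcard, Nat.cast_sub hpos, Nat.cast_one]
  field_simp

theorem stmt9_general (q n k : ℕ) (hq : q.Prime) (hq3 : q % 8 = 3) (hn : n = 2 ^ k)
    (hqbig : 2 * Nat.log 2 n + 1 < q)
    (C : Set (Polynomial (ZMod q)))
    (hC : C = {c : Polynomial (ZMod q) |
      c.degree < ((n / 2 : ℕ) : WithBot ℕ) ∧
      ∀ i : ℕ, ∃ z : ℤ, |z| ≤ (Nat.log 2 n : ℤ) ∧ c.coeff i = (z : ZMod q)}) :
    (Nat.card {u : Polynomial (ZMod q) // u ∈ C ∧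
        IsUnit (Ideal.Quotient.mk (Ideal.span {(X : Polynomial (ZMod q)) ^ n + 1}) u)} : ℝ)
      / (Nat.card {u : Polynomial (ZMod q) // u ∈ C} : ℝ)
      = 1 - ((1 + 2 * (Nat.log 2 n : ℝ)) ^ (n / 2 : ℕ))⁻¹ := by
  have := Fact.mk hq
  have hcard : Nat.card C = (2 * Nat.log 2 n + 1) ^ (n / 2) := by
    rw [← card_balancedResidues (q := q) (L := Nat.log 2 n) (by omega),
      ← natCard_degree_lt_coeff_mem (mem_balancedResidues.2 ⟨0, by simp, by simp⟩)]
    exact Nat.card_congr (Equiv.subtypeEquivRight fun u => by simp [hC, mem_balancedResidues])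
  have : Finite C := Nat.finite_of_card_ne_zero (by rw [hcard]; positivity)
  have hfactor (p : (ZMod q)[X]) (hp : Irreducible p) (hdvd : p ∣ X ^ n + 1) :
      ((n / 2 : ℕ) : WithBot ℕ) ≤ p.degree := by
    subst hn
    have h := Nat.le_of_dvd hp.natDegree_pos
      (two_pow_pred_dvd_natDegree_of_dvd_X_pow_add_one hq3 hp hdvd)
    have hhalf : 2 ^ k / 2 ≤ 2 ^ (k - 1) :=
      Nat.div_le_of_le_mul (by rcases k with _ | k <;> simp [pow_succ'])
    rw [degree_eq_natDegree hp.ne_zero, Nat.cast_le]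
    exact hhalf.trans h
  have hf : ¬IsUnit (X ^ n + 1 : (ZMod q)[X]) :=
    not_isUnit_of_natDegree_pos _ (by rw [← C_1, natDegree_X_pow_add_C, hn]; positivity)
  have hunit (u) (hu : u ∈ C) :
      IsUnit (Ideal.Quotient.mk (Ideal.span {X ^ n + 1}) u) ↔ u ≠ 0 :=
    isUnit_quotient_mk_iff_ne_zero hf fun p hp hdvd =>
      ((hC ▸ hu).1).trans_le (hfactor p hp hdvd)
  rw [Nat.card_congr (Equiv.subtypeEquivRight fun u => and_congr_right (hunit u)),
    natCard_mem_and_ne_div_natCard (hC ▸ ⟨by simp, fun _ => ⟨0, by simp⟩⟩), hcard]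
  push_cast
  ring

/-- If `u` is sampled uniformly from the challenge set
`C = {c ∈ (ℤ/qℤ)[x]/(x^n+1) : coefficients in {−⌊log n⌋,…,⌊log n⌋}, deg c < n/2}`
(with `q` prime, `q ≡ 3 mod 8`, `n` a power of 2, and `q` large enough that the
representatives are distinct, so `|C| = (1+2⌊log n⌋)^{n/2}`), then `u` is invertible in
`R_q = (ℤ/qℤ)[x]/(x^n+1)` with probability `1 − (1+2⌊log n⌋)^{−n/2}`. -/
theorem stmt9 (q n k : ℕ) (hq : q.Prime) (hq3 : q % 8 = 3) (hn : n = 2 ^ k) (hk : 1 ≤ k)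
    (hqbig : 2 * Nat.log 2 n + 1 < q)
    (C : Set (Polynomial (ZMod q)))
    (hC : C = {c : Polynomial (ZMod q) |
      c.degree < ((n / 2 : ℕ) : WithBot ℕ) ∧
      ∀ i : ℕ, ∃ z : ℤ, |z| ≤ (Nat.log 2 n : ℤ) ∧ c.coeff i = (z : ZMod q)}) :
    (Nat.card {u : Polynomial (ZMod q) // u ∈ C ∧
        IsUnit (Ideal.Quotient.mk (Ideal.span {(X : Polynomial (ZMod q)) ^ n + 1}) u)} : ℝ)
      / (Nat.card {u : Polynomial (ZMod q) // u ∈ C} : ℝ)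
      = 1 - ((1 + 2 * (Nat.log 2 n : ℝ)) ^ (n / 2 : ℕ))⁻¹ :=
  stmt9_general q n k hq hq3 hn hqbig C hC
end

section
/- Perfect simulation of Schnorr transcripts: let G be a cyclic group of prime order q with generator g, let s ∈ ℤ/qℤ and pk = g^s. The distribution of (X, c, z) where x, c are uniform and independent in ℤ/qℤ, X = g^x, z = s·c + x (real transcript) is identical to the distribution of (X, c, z) where z, c are uniform and independent in ℤ/qℤ and X = g^z · pk^{−c} (simulated transcript). -/
lemma uniform_map_equiv {α : Type*} [Fintype α] [Nonempty α] (e : α ≃ α) :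
    (PMF.uniformOfFintype α).map e = PMF.uniformOfFintype α := by
  ext b
  rw [PMF.map_apply]
  rw [tsum_eq_single (e.symm b) (by
    intro a ha
    simp only [ite_eq_right_iff]
    intro h
    exact absurd (by simp [h]) ha)]
  simp

lemma zmod_pow_add {q : ℕ} [NeZero q] {G : Type*} [Group G] (g : G) (hog : orderOf g = q)
    (a b : ZMod q) : g ^ (a + b).val = g ^ a.val * g ^ b.val := by
  rw [← pow_add, pow_eq_pow_iff_modEq, hog, ZMod.val_add, Nat.ModEq, Nat.mod_mod_of_dvd _ dvd_rfl]

lemma zmod_pow_mul {q : ℕ} [NeZero q] {G : Type*} [Group G] (g : G) (hog : orderOf g = q)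
    (a b : ZMod q) : g ^ (a * b).val = (g ^ a.val) ^ b.val := by
  rw [← pow_mul, pow_eq_pow_iff_modEq, hog, ZMod.val_mul, Nat.ModEq, Nat.mod_mod_of_dvd _ dvd_rfl]

/-- Perfect simulation of Schnorr transcripts: for a cyclic group `G` of prime
order `q` with generator `g` and `pk = g ^ s`, the distribution of `(X, c, z)` with `x, c`
uniform independent, `X = g^x`, `z = s·c + x` equals the distribution of `(X, c, z)` with
`z, c` uniform independent and `X = g^z · pk^{−c}`. -/
theorem stmt14 (q : ℕ) (hq : q.Prime) [NeZero q] (G : Type*) [CommGroup G] [Fintype G]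
    [DecidableEq G] (hcard : Fintype.card G = q) (g : G) (hg : ∀ m : G, m ∈ Subgroup.zpowers g)
    (s : ZMod q) (pk : G) (hpk : pk = g ^ s.val) :
    (PMF.uniformOfFintype (ZMod q × ZMod q)).map
        (fun p => ((g ^ p.1.val, p.2, s * p.2 + p.1) : G × ZMod q × ZMod q))
      = (PMF.uniformOfFintype (ZMod q × ZMod q)).map
        (fun p => ((g ^ p.1.val * (pk ^ p.2.val)⁻¹, p.2, p.1) : G × ZMod q × ZMod q)) := by
  have hog : orderOf g = q := by
    rw [orderOf_eq_card_of_forall_mem_zpowers hg]; simp [hcard]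
  set e : ZMod q × ZMod q ≃ ZMod q × ZMod q :=
    { toFun := fun p => (s * p.2 + p.1, p.2)
      invFun := fun p => (p.1 - s * p.2, p.2)
      left_inv := fun p => by simp
      right_inv := fun p => by simp }
  conv_rhs => rw [← uniform_map_equiv e, PMF.map_comp]
  congr 1
  funext p
  simp only [Function.comp_apply, e, Equiv.coe_fn_mk, hpk]
  refine Prod.ext ?_ rfl
  rw [zmod_pow_add g hog, ← zmod_pow_mul g hog]
  group
end
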